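/- Fix 0 < γ < 1, let 𝒮 = {(x₁,x₂,x₃) ∈ ℝ³ : x₂² + x₃² ≤ x₁^γ, x₁ > 0}, and let r : ℝ³ → [1,∞) be a measurable exponent with 3 < ess inf_{ℝ³∖𝒮} r ≤ ess sup_{ℝ³∖𝒮} r < ∞ and 2γ+1 < ess inf_𝒮 r ≤ ess sup_𝒮 r < 3. Let θ ∈ C_c^∞(ℝ³) with 0 ≤ θ ≤ 1, θ(x) = 1 for |x| ≤ 1 and θ(x) = 0 for |x| ≥ 2, and for R > 1 set θ_R(x) = θ(x/R). Then ‖ |∇θ_R| ‖_{L^{r(·)}(ℝ³)} → 0 as R → ∞. -/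

import Mathlib

open MeasureTheory Filter Metric
open scoped ENNReal Topology NNReal

noncomputable section

/-- `ℝ³` as a Euclidean space (coordinates `x 0, x 1, x 2` standing for `x₁, x₂, x₃`). -/
abbrev E3 : Type := EuclideanSpace ℝ (Fin 3)

/-- Partial derivative `∂ᵢ g` of a scalar function on `ℝ³`. -/
def pd (i : Fin 3) (g : E3 → ℝ) (x : E3) : ℝ :=
  fderiv ℝ g x (EuclideanSpace.single i 1)

/-- Laplacian of a scalar function on `ℝ³`. -/
def lap3 (g : E3 → ℝ) (x : E3) : ℝ := ∑ i : Fin 3, pd i (pd i g) x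

/-- The modular `ρ_{p(·)}(f) = ∫ |f|^{p(x)} dx` for a finite real-valued variable exponent. -/
def modularV (p : E3 → ℝ) (f : E3 → ℝ) : ℝ≥0∞ :=
  ∫⁻ x, ENNReal.ofReal (|f x| ^ p x)

/-- Membership in the variable exponent Lebesgue space `L^{p(·)}(ℝ³)`
(finiteness of the Luxemburg norm). -/
def MemVarLp (p : E3 → ℝ) (f : E3 → ℝ) : Prop :=
  ∃ l : ℝ, 0 < l ∧ modularV p (fun x => f x / l) ≤ 1

/-- The Luxemburg norm `‖f‖_{L^{p(·)}(ℝ³)}`. -/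
def varLpNorm (p : E3 → ℝ) (f : E3 → ℝ) : ℝ :=
  sInf {l : ℝ | 0 < l ∧ modularV p (fun x => f x / l) ≤ 1}

/-- `(u, P)` is a weak solution of the stationary Navier–Stokes equations
`Δu − (u·∇)u − ∇P = 0`, `div u = 0` on `ℝ³`. -/
def IsWeakSolutionNS (u : E3 → E3) (P : E3 → ℝ) : Prop :=
  (∀ φ : E3 → E3, ContDiff ℝ (⊤ : ℕ∞) φ → HasCompactSupport φ →
      ((∫ x, ∑ j : Fin 3, u x j * lap3 (fun y => φ y j) x) +
        (∑ i : Fin 3, ∑ j : Fin 3, ∫ x, u x i * u x j * pd i (fun y => φ y j) x) +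
        (∫ x, P x * ∑ j : Fin 3, pd j (fun y => φ y j) x) = 0)) ∧
  (∀ ψ : E3 → ℝ, ContDiff ℝ (⊤ : ℕ∞) ψ → HasCompactSupport ψ →
      (∫ x, ∑ j : Fin 3, u x j * pd j ψ x) = 0)

/-- The infinite cylinder `𝒞 = {x ∈ ℝ³ : x₂² + x₃² ≤ 1}`. -/
def cylC : Set E3 := {x | (x 1) ^ 2 + (x 2) ^ 2 ≤ 1}


/-- The paraboloid-like region `𝒮 = {x ∈ ℝ³ : x₂² + x₃² ≤ x₁^γ, x₁ > 0}`. -/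
def setS (γ : ℝ) : Set E3 := {x | 0 < x 0 ∧ (x 1) ^ 2 + (x 2) ^ 2 ≤ (x 0) ^ γ}

lemma rpow_bound_aux {v B e rx : ℝ} (hv : 0 ≤ v) (hvB : v ≤ B) (hB1 : B ≤ 1)
    (he : 0 < e) (herx : e ≤ rx) : v ^ rx ≤ B ^ e :=
  calc v ^ rx ≤ v ^ e :=
        Real.rpow_le_rpow_of_exponent_ge' hv (hvB.trans hB1) he.le herx
    _ ≤ B ^ e := Real.rpow_le_rpow hv hvB he.le

lemma coord_continuous (i : Fin 3) : Continuous fun x : E3 => x i :=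
  (EuclideanSpace.proj (𝕜 := ℝ) i).continuous

lemma abs_coord_le_norm (x : E3) (i : Fin 3) : |x i| ≤ ‖x‖ := by
  rw [EuclideanSpace.norm_eq, ← Real.sqrt_sq_eq_abs]
  apply Real.sqrt_le_sqrt
  have := Finset.single_le_sum (f := fun j : Fin 3 => ‖x j‖ ^ 2)
    (fun j _ => sq_nonneg _) (Finset.mem_univ i)
  simpa [Real.norm_eq_abs, sq_abs] using this

lemma volume_coord_box (s : Fin 3 → Set ℝ) (hs : ∀ i, MeasurableSet (s i)) :
    volume {x : E3 | ∀ i, x i ∈ s i} = ∏ i, volume (s i) := by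
  have h := (EuclideanSpace.volume_preserving_symm_measurableEquiv_toLp (Fin 3)).measure_preimage
    (MeasurableSet.univ_pi hs).nullMeasurableSet
  have heq : (MeasurableEquiv.toLp 2 (Fin 3 → ℝ)).symm ⁻¹' (Set.univ.pi s)
      = {x : E3 | ∀ i, x i ∈ s i} := by
    ext x
    simp [Set.mem_pi]
  rw [heq] at h
  rw [h, volume_pi_pi]

lemma pd_scale (θ : E3 → ℝ) (hθ : ContDiff ℝ (⊤ : ℕ∞) θ) (R : ℝ) (i : Fin 3) (x : E3) :
    pd i (fun y => θ (R⁻¹ • y)) x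
      = R⁻¹ * fderiv ℝ θ (R⁻¹ • x) (EuclideanSpace.single i 1) := by
  have h1 : HasFDerivAt (fun y : E3 => R⁻¹ • y)
      (R⁻¹ • ContinuousLinearMap.id ℝ E3) x := (hasFDerivAt_id x).const_smul R⁻¹
  have h2 : HasFDerivAt θ (fderiv ℝ θ (R⁻¹ • x)) (R⁻¹ • x) :=
    (hθ.differentiable (by simp) (R⁻¹ • x)).hasFDerivAt
  have h3 := (h2.comp x h1).fderiv
  rw [pd, show (fun y : E3 => θ (R⁻¹ • y)) = θ ∘ (fun y : E3 => R⁻¹ • y) from rfl, h3]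
  simp

lemma fderiv_zero_of_2lt (θ : E3 → ℝ) (hθout : ∀ x : E3, 2 ≤ ‖x‖ → θ x = 0)
    {z : E3} (hz : 2 < ‖z‖) : fderiv ℝ θ z = 0 := by
  have hopen : IsOpen {y : E3 | 2 < ‖y‖} := isOpen_lt continuous_const continuous_norm
  have hev : θ =ᶠ[𝓝 z] fun _ => (0 : ℝ) := by
    filter_upwards [hopen.mem_nhds hz] with y hy
    exact hθout y hy.le
  rw [hev.fderiv_eq]
  exact fderiv_const_apply 0

set_option maxHeartbeats 2000000 in
/-- Decay of `‖|∇θ_R|‖_{L^{r(·)}(ℝ³)}` as `R → ∞` for the conjugate-type exponent `r`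
adapted to the region `𝒮`. -/
theorem gradient_cutoff_norm_tendsto_zero_paraboloid
    (γ : ℝ) (hγ0 : 0 < γ) (hγ1 : γ < 1)
    (r : E3 → ℝ) (hrmeas : Measurable r) (hr1 : ∀ x, 1 ≤ r x)
    (hout_lb : (3 : ℝ) < essInf r (volume.restrict (setS γ)ᶜ))
    (hout_le : essInf r (volume.restrict (setS γ)ᶜ) ≤ essSup r (volume.restrict (setS γ)ᶜ))
    (hout_ub : IsBoundedUnder (· ≤ ·) (ae (volume.restrict (setS γ)ᶜ)) r)
    (hin_lb : 2 * γ + 1 < essInf r (volume.restrict (setS γ)))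
    (hin_le : essInf r (volume.restrict (setS γ)) ≤ essSup r (volume.restrict (setS γ)))
    (hin_ub : essSup r (volume.restrict (setS γ)) < 3)
    (θ : E3 → ℝ) (hθsmooth : ContDiff ℝ (⊤ : ℕ∞) θ) (hθsupp : HasCompactSupport θ)
    (hθ0 : ∀ x, 0 ≤ θ x) (hθ1 : ∀ x, θ x ≤ 1)
    (hθin : ∀ x : E3, ‖x‖ ≤ 1 → θ x = 1) (hθout : ∀ x : E3, 2 ≤ ‖x‖ → θ x = 0) :
    Tendsto (fun R : ℝ => varLpNorm r
        (fun x => Real.sqrt (∑ i : Fin 3, (pd i (fun y => θ (R⁻¹ • y)) x) ^ 2)))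
      atTop (𝓝 0) := by
  set g : ℝ → E3 → ℝ :=
    fun R x => Real.sqrt (∑ i : Fin 3, (pd i (fun y => θ (R⁻¹ • y)) x) ^ 2) with hgdef
  show Tendsto (fun R : ℝ => varLpNorm r (g R)) atTop (𝓝 0)
  -- bound on the gradient of θ
  obtain ⟨M, hM⟩ := (hθsupp.fderiv (𝕜 := ℝ)).exists_bound_of_continuous
    (hθsmooth.continuous_fderiv (by simp))
  have hM0 : 0 ≤ M := le_trans (norm_nonneg _) (hM 0)
  set C : ℝ := Real.sqrt 3 * M + 1 with hCdef
  have hC0 : 0 < C := by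
    have := mul_nonneg (Real.sqrt_nonneg 3) hM0
    linarith
  -- basic properties of g
  have hgnn : ∀ R x, 0 ≤ g R x := fun R x => Real.sqrt_nonneg _
  have hgle : ∀ R : ℝ, 0 < R → ∀ x, g R x ≤ C / R := by
    intro R hR0 x
    have hpd : ∀ i : Fin 3, (pd i (fun y => θ (R⁻¹ • y)) x) ^ 2 ≤ (M / R) ^ 2 := by
      intro i
      have h2 : |pd i (fun y => θ (R⁻¹ • y)) x| ≤ M / R := by
        rw [pd_scale θ hθsmooth R i x, abs_mul, abs_inv, abs_of_pos hR0]
        have h3 : |fderiv ℝ θ (R⁻¹ • x) (EuclideanSpace.single i 1)| ≤ M := by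
          calc |fderiv ℝ θ (R⁻¹ • x) (EuclideanSpace.single i 1)|
              ≤ ‖fderiv ℝ θ (R⁻¹ • x)‖ * ‖EuclideanSpace.single i (1 : ℝ)‖ :=
                (fderiv ℝ θ (R⁻¹ • x)).le_opNorm _
            _ = ‖fderiv ℝ θ (R⁻¹ • x)‖ := by rw [EuclideanSpace.norm_single]; simp
            _ ≤ M := hM _
        calc R⁻¹ * |fderiv ℝ θ (R⁻¹ • x) (EuclideanSpace.single i 1)|
            ≤ R⁻¹ * M := by
              exact mul_le_mul_of_nonneg_left h3 (inv_nonneg.2 hR0.le)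
          _ = M / R := (inv_mul_eq_div _ _)
      calc (pd i (fun y => θ (R⁻¹ • y)) x) ^ 2
          = |pd i (fun y => θ (R⁻¹ • y)) x| ^ 2 := (sq_abs _).symm
        _ ≤ (M / R) ^ 2 := by
            exact pow_le_pow_left₀ (abs_nonneg _) h2 2
    calc g R x ≤ Real.sqrt (∑ _i : Fin 3, (M / R) ^ 2) :=
          Real.sqrt_le_sqrt (Finset.sum_le_sum fun i _ => hpd i)
      _ = Real.sqrt (3 * (M / R) ^ 2) := by
          rw [Finset.sum_const, Finset.card_univ, Fintype.card_fin, nsmul_eq_mul]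
          norm_num
      _ = Real.sqrt 3 * (M / R) := by
          rw [Real.sqrt_mul (by norm_num), Real.sqrt_sq (div_nonneg hM0 hR0.le)]
      _ ≤ C / R := by
          rw [hCdef]
          rw [mul_div_assoc']
          gcongr
          linarith
  have hgzero : ∀ R : ℝ, 0 < R → ∀ x : E3, 2 * R < ‖x‖ → g R x = 0 := by
    intro R hR0 x hx
    have hz : 2 < ‖R⁻¹ • x‖ := by
      rw [norm_smul, norm_inv, Real.norm_eq_abs, abs_of_pos hR0]
      calc (2 : ℝ) = R⁻¹ * (2 * R) := by field_simp
        _ < R⁻¹ * ‖x‖ := by exact mul_lt_mul_of_pos_left hx (inv_pos.2 hR0)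
    have hfz := fderiv_zero_of_2lt θ hθout hz
    have hzpd : ∀ i : Fin 3, pd i (fun y => θ (R⁻¹ • y)) x = 0 := by
      intro i; rw [pd_scale θ hθsmooth R i x, hfz]; simp
    simp [hgdef, hzpd]
  -- measurability of setS
  have hS : MeasurableSet (setS γ) := by
    have h0 := coord_continuous 0
    have h1 := coord_continuous 1
    have h2 := coord_continuous 2
    have hA : MeasurableSet {x : E3 | 0 < x 0} :=
      (isOpen_lt continuous_const h0).measurableSet
    have hB : MeasurableSet {x : E3 | (x 1) ^ 2 + (x 2) ^ 2 ≤ (x 0) ^ γ} :=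
      (isClosed_le (by fun_prop) ((Real.continuous_rpow_const hγ0.le).comp h0)).measurableSet
    have : setS γ = {x : E3 | 0 < x 0} ∩ {x : E3 | (x 1) ^ 2 + (x 2) ^ 2 ≤ (x 0) ^ γ} := rfl
    rw [this]; exact hA.inter hB
  -- essential infima
  set p : ℝ := essInf r (volume.restrict (setS γ)ᶜ) with hpdef
  set q : ℝ := essInf r (volume.restrict (setS γ)) with hqdef
  have hbdd : ∀ μ : Measure E3, IsBoundedUnder (· ≥ ·) (ae μ) r :=
    fun μ => isBoundedUnder_of ⟨1, fun x => hr1 x⟩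
  have hout_ae : ∀ᵐ x ∂(volume.restrict (setS γ)ᶜ), p ≤ r x := ae_essInf_le (hbdd _)
  have hin_ae : ∀ᵐ x ∂(volume.restrict (setS γ)), q ≤ r x := ae_essInf_le (hbdd _)
  have hp3 : (3 : ℝ) < p := hout_lb
  have hq2 : 2 * γ + 1 < q := hin_lb
  -- unit ball volume
  set K : ℝ≥0∞ := volume (ball (0 : E3) 1) with hKdef
  have hK : K ≠ ⊤ := measure_ball_lt_top.ne
  set K' : ℝ := K.toReal with hK'def
  -- main estimate
  rw [NormedAddCommGroup.tendsto_nhds_zero]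
  intro ε hε
  set lam : ℝ := ε / 2 with hlamdef
  have hlam0 : 0 < lam := by positivity
  set F : ℝ → ℝ := fun R =>
      (C / (R * lam)) ^ p * ((2 * R) ^ (3 : ℕ) * K') +
      (C / (R * lam)) ^ q *
        ((2 * R) * ((2 * Real.sqrt ((2 * R) ^ γ)) * (2 * Real.sqrt ((2 * R) ^ γ)))) with hFdef
  have hCl0 : 0 < C / lam := div_pos hC0 hlam0
  have hFt : Tendsto F atTop (𝓝 0) := by
    have h1 := (tendsto_rpow_neg_atTop (show (0 : ℝ) < p - 3 by linarith)).const_mul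
      (8 * K' * (C / lam) ^ p)
    have h2 := (tendsto_rpow_neg_atTop (show (0 : ℝ) < q - (1 + γ) by linarith)).const_mul
      (8 * (2 : ℝ) ^ γ * (C / lam) ^ q)
    have h12 := h1.add h2
    rw [mul_zero, mul_zero, add_zero] at h12
    apply h12.congr'
    filter_upwards [eventually_gt_atTop (0 : ℝ)] with R hR
    have hRlam : C / (R * lam) = (C / lam) * R⁻¹ := by
      rw [mul_comm R lam, ← div_div, div_eq_mul_inv]
    have e1 : (8 * K' * (C / lam) ^ p) * R ^ (-(p - 3))
        = (C / (R * lam)) ^ p * ((2 * R) ^ (3 : ℕ) * K') := by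
      have h3 : ((2 : ℝ) * R) ^ (3 : ℕ) = 8 * R ^ (3 : ℕ) := by ring
      have h4 : (R : ℝ) ^ (3 : ℕ) = R ^ ((3 : ℕ) : ℝ) := (Real.rpow_natCast R 3).symm
      rw [hRlam, Real.mul_rpow hCl0.le (inv_nonneg.2 hR.le), Real.inv_rpow hR.le,
        ← Real.rpow_neg hR.le, h3, h4, show -(p - 3) = -p + ((3 : ℕ) : ℝ) by push_cast; ring,
        Real.rpow_add hR]
      ring
    have e2 : (8 * (2 : ℝ) ^ γ * (C / lam) ^ q) * R ^ (-(q - (1 + γ)))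
        = (C / (R * lam)) ^ q *
          ((2 * R) * ((2 * Real.sqrt ((2 * R) ^ γ)) * (2 * Real.sqrt ((2 * R) ^ γ)))) := by
      have hτ : Real.sqrt ((2 * R) ^ γ) * Real.sqrt ((2 * R) ^ γ) = (2 * R) ^ γ :=
        Real.mul_self_sqrt (Real.rpow_nonneg (by linarith) γ)
      have h6 : ((2 : ℝ) * R) ^ γ = (2 : ℝ) ^ γ * R ^ γ :=
        Real.mul_rpow (by norm_num) hR.le
      rw [hRlam, Real.mul_rpow hCl0.le (inv_nonneg.2 hR.le), Real.inv_rpow hR.le,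
        ← Real.rpow_neg hR.le, show -(q - (1 + γ)) = -q + 1 + γ by ring,
        Real.rpow_add hR, Real.rpow_add hR, Real.rpow_one,
        show (2 * Real.sqrt ((2 * R) ^ γ)) * (2 * Real.sqrt ((2 * R) ^ γ))
          = 4 * (Real.sqrt ((2 * R) ^ γ) * Real.sqrt ((2 * R) ^ γ)) by ring, hτ, h6]
      ring
    rw [hFdef]
    dsimp only
    rw [← e1, ← e2]
  have hF1 : ∀ᶠ R in atTop, F R < 1 := hFt.eventually_lt_const one_pos
  -- the key eventual bound on the modular
  have hkey : ∀ᶠ R in atTop, modularV r (fun x => g R x / lam) ≤ 1 := by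
    filter_upwards [eventually_ge_atTop (1 : ℝ), eventually_ge_atTop (C / lam), hF1]
      with R hR1 hRC hFR
    have hR0 : (0 : ℝ) < R := lt_of_lt_of_le one_pos hR1
    set B : ℝ := C / (R * lam) with hBdef
    have hB0 : 0 ≤ B := div_nonneg hC0.le (by positivity)
    have hB1 : B ≤ 1 := by
      rw [hBdef, div_le_one (by positivity)]
      calc C = (C / lam) * lam := by field_simp
        _ ≤ R * lam := mul_le_mul_of_nonneg_right hRC hlam0.le
    have hvB : ∀ x, |g R x / lam| ≤ B := by
      intro x
      rw [abs_of_nonneg (div_nonneg (hgnn R x) hlam0.le)]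
      have h := (div_le_div_iff_of_pos_right hlam0).2 (hgle R hR0 x)
      rw [hBdef]
      rwa [div_div] at h
    have hrx0 : ∀ x : E3, r x ≠ 0 := fun x => by linarith [hr1 x]
    -- vanishing outside the ball
    have hvanish : ∀ x : E3, x ∉ closedBall (0 : E3) (2 * R) →
        ENNReal.ofReal (|g R x / lam| ^ r x) = 0 := by
      intro x hmem
      have hlt : 2 * R < ‖x‖ := by
        have : ¬‖x‖ ≤ 2 * R := by simpa [mem_closedBall, dist_zero_right] using hmem
        linarith [not_le.1 this]
      have hgz : g R x = 0 := hgzero R hR0 x hlt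
      simp [hgz, Real.zero_rpow (hrx0 x)]
    -- outer part
    have hout_int : ∫⁻ x in (setS γ)ᶜ, ENNReal.ofReal (|g R x / lam| ^ r x)
        ≤ ENNReal.ofReal (B ^ p) * (ENNReal.ofReal ((2 * R) ^ (3 : ℕ)) * K) := by
      have houtb : ∀ᵐ x ∂(volume.restrict (setS γ)ᶜ),
          ENNReal.ofReal (|g R x / lam| ^ r x)
            ≤ (closedBall (0 : E3) (2 * R)).indicator
                (fun _ => ENNReal.ofReal (B ^ p)) x := by
        filter_upwards [hout_ae] with x hx
        by_cases hmem : x ∈ closedBall (0 : E3) (2 * R)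
        · rw [Set.indicator_of_mem hmem]
          exact ENNReal.ofReal_le_ofReal
            (rpow_bound_aux (abs_nonneg _) (hvB x) hB1 (by linarith) hx)
        · rw [hvanish x hmem]; exact zero_le
      calc ∫⁻ x in (setS γ)ᶜ, ENNReal.ofReal (|g R x / lam| ^ r x)
          ≤ ∫⁻ x in (setS γ)ᶜ, (closedBall (0 : E3) (2 * R)).indicator
              (fun _ => ENNReal.ofReal (B ^ p)) x := lintegral_mono_ae houtb
        _ = ENNReal.ofReal (B ^ p) *
            (volume.restrict (setS γ)ᶜ) (closedBall (0 : E3) (2 * R)) := by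
            rw [lintegral_indicator measurableSet_closedBall, setLIntegral_const]
        _ ≤ ENNReal.ofReal (B ^ p) * volume (closedBall (0 : E3) (2 * R)) := by
            gcongr
            exact Measure.restrict_le_self
        _ = ENNReal.ofReal (B ^ p) * (ENNReal.ofReal ((2 * R) ^ (3 : ℕ)) * K) := by
            rw [Measure.addHaar_closedBall _ _ (by positivity : (0 : ℝ) ≤ 2 * R),
              finrank_euclideanSpace_fin]
    -- inner part
    set τ : ℝ := Real.sqrt ((2 * R) ^ γ) with hτdef
    have hτ0 : 0 ≤ τ := Real.sqrt_nonneg _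
    set I : Fin 3 → Set ℝ := fun i => if i = 0 then Set.Icc 0 (2 * R) else Set.Icc (-τ) τ
      with hIdef
    have hin_int : ∫⁻ x in setS γ, ENNReal.ofReal (|g R x / lam| ^ r x)
        ≤ ENNReal.ofReal (B ^ q) *
          (ENNReal.ofReal (2 * R) * (ENNReal.ofReal (2 * τ) * ENNReal.ofReal (2 * τ))) := by
      have hinb : ∀ᵐ x ∂(volume.restrict (setS γ)),
          ENNReal.ofReal (|g R x / lam| ^ r x)
            ≤ ({x : E3 | ∀ i, x i ∈ I i}).indicator
                (fun _ => ENNReal.ofReal (B ^ q)) x := by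
        filter_upwards [hin_ae, ae_restrict_mem hS] with x hx hxS
        by_cases hmem : x ∈ closedBall (0 : E3) (2 * R)
        · have hxnorm : ‖x‖ ≤ 2 * R := by
            rwa [mem_closedBall, dist_zero_right] at hmem
          have hx0 : 0 < x 0 := hxS.1
          have hx0le : x 0 ≤ 2 * R :=
            le_trans (le_abs_self _) (le_trans (abs_coord_le_norm x 0) hxnorm)
          have hpow : (x 0) ^ γ ≤ (2 * R) ^ γ := Real.rpow_le_rpow hx0.le hx0le hγ0.le
          have hsum : (x 1) ^ 2 + (x 2) ^ 2 ≤ (2 * R) ^ γ := le_trans hxS.2 hpow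
          have habs1 : |x 1| ≤ τ := by
            rw [← Real.sqrt_sq_eq_abs, hτdef]
            exact Real.sqrt_le_sqrt (by nlinarith [sq_nonneg (x 2)])
          have habs2 : |x 2| ≤ τ := by
            rw [← Real.sqrt_sq_eq_abs, hτdef]
            exact Real.sqrt_le_sqrt (by nlinarith [sq_nonneg (x 1)])
          have hxbox : x ∈ {x : E3 | ∀ i, x i ∈ I i} := by
            intro i
            simp only [hIdef]
            by_cases h : i = 0
            · subst h
              simp only [if_pos]
              exact Set.mem_Icc.2 ⟨hx0.le, hx0le⟩
            · rw [if_neg h]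
              have h12 : i = 1 ∨ i = 2 := by omega
              rcases h12 with h1 | h1 <;> subst h1
              · exact Set.mem_Icc.2 (abs_le.1 habs1)
              · exact Set.mem_Icc.2 (abs_le.1 habs2)
          rw [Set.indicator_of_mem hxbox]
          exact ENNReal.ofReal_le_ofReal
            (rpow_bound_aux (abs_nonneg _) (hvB x) hB1 (by linarith) hx)
        · rw [hvanish x hmem]; exact zero_le
      have hboxvol : volume {x : E3 | ∀ i, x i ∈ I i}
          = ENNReal.ofReal (2 * R) * (ENNReal.ofReal (2 * τ) * ENNReal.ofReal (2 * τ)) := by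
        rw [volume_coord_box I (by
          intro i
          rw [hIdef]
          by_cases h : i = 0 <;> simp [h, measurableSet_Icc])]
        have hI0 : I 0 = Set.Icc 0 (2 * R) := if_pos rfl
        have hI1 : I 1 = Set.Icc (-τ) τ := if_neg (by decide)
        have hI2 : I 2 = Set.Icc (-τ) τ := if_neg (by decide)
        rw [Fin.prod_univ_three, hI0, hI1, hI2, Real.volume_Icc, Real.volume_Icc,
          show (2 : ℝ) * R - 0 = 2 * R by ring,
          show τ - -τ = 2 * τ by ring, mul_assoc]
      calc ∫⁻ x in setS γ, ENNReal.ofReal (|g R x / lam| ^ r x)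
          ≤ ∫⁻ x in setS γ, ({x : E3 | ∀ i, x i ∈ I i}).indicator
              (fun _ => ENNReal.ofReal (B ^ q)) x := lintegral_mono_ae hinb
        _ = ENNReal.ofReal (B ^ q) *
            (volume.restrict (setS γ)) {x : E3 | ∀ i, x i ∈ I i} := by
            rw [lintegral_indicator (by
              have : MeasurableSet {x : E3 | ∀ i, x i ∈ I i} := by
                have h0 : {x : E3 | ∀ i, x i ∈ I i} = ⋂ i, (fun x : E3 => x i) ⁻¹' I i := by
                  ext y; simp
                rw [h0]
                exact MeasurableSet.iInter fun i =>
                  ((coord_continuous i).measurable) (by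
                    rw [hIdef]; by_cases h : i = 0 <;> simp [h, measurableSet_Icc])
              exact this), setLIntegral_const]
        _ ≤ ENNReal.ofReal (B ^ q) * volume {x : E3 | ∀ i, x i ∈ I i} := by
            gcongr
            exact Measure.restrict_le_self
        _ = _ := by rw [hboxvol]
    -- combine
    have hBp0 : 0 ≤ B ^ p := Real.rpow_nonneg hB0 p
    have hBq0 : 0 ≤ B ^ q := Real.rpow_nonneg hB0 q
    have htotal : modularV r (fun x => g R x / lam) ≤ ENNReal.ofReal (F R) := by
      have hsplit : modularV r (fun x => g R x / lam)
          = (∫⁻ x in setS γ, ENNReal.ofReal (|g R x / lam| ^ r x)) +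
            (∫⁻ x in (setS γ)ᶜ, ENNReal.ofReal (|g R x / lam| ^ r x)) := by
        rw [modularV, ← lintegral_add_compl
          (fun x => ENNReal.ofReal (|g R x / lam| ^ r x)) hS]
      rw [hsplit]
      have hsum := add_le_add hin_int hout_int
      refine le_trans hsum (le_of_eq ?_)
      have hA1 : ENNReal.ofReal (B ^ p * ((2 * R) ^ (3 : ℕ) * K'))
          = ENNReal.ofReal (B ^ p) * (ENNReal.ofReal ((2 * R) ^ (3 : ℕ)) * K) := by
        rw [ENNReal.ofReal_mul hBp0, ENNReal.ofReal_mul (by positivity),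
          hK'def, ENNReal.ofReal_toReal hK]
      have hA2 : ENNReal.ofReal (B ^ q * ((2 * R) * ((2 * τ) * (2 * τ))))
          = ENNReal.ofReal (B ^ q) *
            (ENNReal.ofReal (2 * R) * (ENNReal.ofReal (2 * τ) * ENNReal.ofReal (2 * τ))) := by
        have h2R : (0 : ℝ) ≤ 2 * R := by linarith
        have h2τ : (0 : ℝ) ≤ 2 * τ := by linarith
        rw [ENNReal.ofReal_mul hBq0, ENNReal.ofReal_mul h2R, ENNReal.ofReal_mul h2τ]
      rw [hFdef]
      dsimp only
      rw [ENNReal.ofReal_add (by positivity) (by positivity), hA1, hA2, add_comm]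
    exact le_trans htotal (ENNReal.ofReal_le_one.2 hFR.le)
  -- conclude
  filter_upwards [hkey] with R hR
  have hmem : lam ∈ {l : ℝ | 0 < l ∧ modularV r (fun x => g R x / l) ≤ 1} := ⟨hlam0, hR⟩
  have hbdd' : BddBelow {l : ℝ | 0 < l ∧ modularV r (fun x => g R x / l) ≤ 1} :=
    ⟨0, fun l hl => hl.1.le⟩
  have h1 : varLpNorm r (g R) ≤ lam := csInf_le hbdd' hmem
  have h2 : 0 ≤ varLpNorm r (g R) := Real.sInf_nonneg fun l hl => hl.1.le
  rw [Real.norm_eq_abs, abs_of_nonneg h2]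
  calc varLpNorm r (g R) ≤ lam := h1
    _ < ε := by rw [hlamdef]; linarith
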